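/- arXiv:1205.0119 — 4 statements merged into one kernel-verified Lean document; each statement's English description precedes it below -/
import Mathlib

section
/- Apply the sequence of odd reflections at the odd roots ε_d - δ_1, ε_d - δ_2, …, ε_d - δ_n, ε_{d-1} - δ_1, …, ε_1 - δ_n (in this order) to the weight Λ₀ = ∑_{j=1}^d k_j ε_j, where at each step the weight Λ becomes Λ - α if ⟨Λ, α⟩ ≠ 0 and stays Λ if ⟨Λ, α⟩ = 0 (using ⟨ε_j,ε_k⟩ = δ_{jk}/2, ⟨δ_i,δ_l⟩ = -δ_{il}/2). If k_1 ≥ … ≥ k_d ≥ 0 are integers and a is the largest index with k_a ≥ n (a = 0 if k_1 < n), then the final weight equals ∑_{j=1}^a (k_j - n) ε_j + ∑_{j=a+1}^d ν_{k_j} + a ν_n, where ν_l = ∑_{i=1}^l δ_i (ν_0 = 0). -/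
/-!
Row `j` of the sequence consists of the roots `ε_j - δ_1, …, ε_j - δ_n`. When it is reached,
the coefficient of `δ_i` counts the rows `j' > j` already processed with `k_{j'} ≥ i`; it is
nonnegative, and it vanishes for `i > k_j` because `k` is decreasing. So along the row the
pairing `(k_j - (i - 1) + s_i) / 2` is positive for `i ≤ k_j`, and it is `0` afterwards: the row
moves `min (k_j, n)` units from `ε_j` onto `δ_1, …, δ_{min (k_j, n)}`. Summing over the rows
gives the `δ_i`-coefficient `#{j : k_j ≥ i}`, which is `a` plus the count over `j > a`.
-/

/-- A weight, as the pair of its `ε`-coefficient vector and `δ`-coefficient vector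
(indexed by `ℕ`, `0`-based; only the first `d`, resp. `n`, entries are used). -/
abbrev WeightZ := (ℕ → ℤ) × (ℕ → ℤ)

/-- One odd reflection at the root `ε_j - δ_i`: the weight `Λ = ∑ c_j ε_j + ∑ s_i δ_i`
becomes `Λ - (ε_j - δ_i)` if `⟨Λ, ε_j - δ_i⟩ = (c_j + s_i)/2 ≠ 0`, and is unchanged
otherwise. -/
def oddRefl (j i : ℕ) (w : WeightZ) : WeightZ :=
  if w.1 j + w.2 i ≠ 0 then
    (Function.update w.1 j (w.1 j - 1), Function.update w.2 i (w.2 i + 1))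
  else w

/-- The sequence of odd roots `ε_d - δ_1, …, ε_d - δ_n, ε_{d-1} - δ_1, …, ε_1 - δ_n`:
`j` runs from `d` down to `1` (coded `d-1` down to `0`), and for each `j`, `i` runs
from `1` up to `n` (coded `0` up to `n-1`). -/
def reflSeq (d n : ℕ) : List (ℕ × ℕ) :=
  (List.range d).reverse.flatMap fun j => (List.range n).map fun i => (j, i)

open Finset

def rowStep (n : ℕ) (w : WeightZ) (j : ℕ) : WeightZ :=
  (List.range n).foldl (fun w i => oddRefl j i w) w

theorem foldl_reflSeq (d n : ℕ) (w : WeightZ) :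
    (reflSeq d n).foldl (fun w p => oddRefl p.1 p.2 w) w
      = (List.range d).reverse.foldl (rowStep n) w := by
  simp [reflSeq, List.foldl_flatMap, rowStep, List.foldl_map]

theorem oddRefl_of_ne_zero {j i : ℕ} {w : WeightZ} (h : w.1 j + w.2 i ≠ 0) :
    oddRefl j i w = (Function.update w.1 j (w.1 j - 1), Function.update w.2 i (w.2 i + 1)) :=
  if_pos h

theorem oddRefl_of_eq_zero {j i : ℕ} {w : WeightZ} (h : w.1 j + w.2 i = 0) :
    oddRefl j i w = w :=
  if_neg (not_not.mpr h)

theorem foldl_oddRefl_range {j m : ℕ} {w : WeightZ} (hc : 0 ≤ w.1 j)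
    (hs : ∀ i < m, 0 ≤ w.2 i) (hs_zero : ∀ i < m, w.1 j ≤ i → w.2 i = 0) :
    (List.range m).foldl (fun w i => oddRefl j i w) w
      = (Function.update w.1 j (w.1 j - min (w.1 j) m),
         fun i => w.2 i + if i < m ∧ (i : ℤ) < w.1 j then 1 else 0) := by
  induction m with
  | zero =>
    rw [Nat.cast_zero, min_eq_right hc, sub_zero, Function.update_eq_self]
    simp
  | succ m ih =>
    rw [List.range_succ, List.foldl_append, ih (fun i hi => hs i (by omega))
      (fun i hi => hs_zero i (by omega))]
    simp only [List.foldl_cons, List.foldl_nil]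
    have hsm := hs m (by omega)
    by_cases hm : (m : ℤ) < w.1 j
    · rw [oddRefl_of_ne_zero (by simp only [Function.update_self]; split_ifs <;> omega)]
      ext i <;> simp only [Function.update_apply] <;> split_ifs <;> subst_vars <;> push_cast <;>
        omega
    · rw [oddRefl_of_eq_zero (by
        simp only [Function.update_self, hs_zero m (by omega) (by omega)]; split_ifs <;> omega)]
      ext i <;> simp only [Function.update_apply] <;> split_ifs <;> push_cast <;> omega

theorem antitoneOn_nat_Iio_of_succ_le {β : Type*} [Preorder β] {f : ℕ → β} {d : ℕ}
    (hf : ∀ j, j + 1 < d → f (j + 1) ≤ f j) : AntitoneOn f (Set.Iio d) := by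
  intro i _ j hj hij
  induction hij with
  | refl => exact le_rfl
  | step _ ih => exact (hf _ hj).trans (ih (Nat.lt_of_succ_lt hj))

/-- The weight once the rows `d - 1, d - 2, …, t` have been processed. -/
def weightAfterRows (d n : ℕ) (k : ℕ → ℤ) (t : ℕ) : WeightZ :=
  (fun j => if j < t then k j else if j < d then k j - min (k j) n else 0,
   fun i => if i < n then #{j ∈ Ico t d | (i : ℤ) + 1 ≤ k j} else 0)

section

variable {d n : ℕ} {k : ℕ → ℤ}

theorem weightAfterRows_self :
    weightAfterRows d n k d = (fun j => if j < d then k j else 0, fun _ => 0) := by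
  ext j <;> simp only [weightAfterRows, Ico_self, filter_empty, card_empty]
  · split_ifs <;> rfl
  · simp

theorem rowStep_weightAfterRows (hdec : ∀ j, j + 1 < d → k (j + 1) ≤ k j)
    (hnonneg : ∀ j, j < d → 0 ≤ k j) {t : ℕ} (ht : t < d) :
    rowStep n (weightAfterRows d n k (t + 1)) t = weightAfterRows d n k t := by
  have hkt : (weightAfterRows d n k (t + 1)).1 t = k t := by simp [weightAfterRows]
  have hlater_rows : ∀ i : ℕ, k t ≤ i → #{j ∈ Ico (t + 1) d | (i : ℤ) + 1 ≤ k j} = 0 := by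
    intro i hi
    refine card_eq_zero.mpr (filter_eq_empty_iff.mpr fun j hj => ?_)
    obtain ⟨htj, hjd⟩ := mem_Ico.mp hj
    have := antitoneOn_nat_Iio_of_succ_le hdec (Set.mem_Iio.2 ht) (Set.mem_Iio.2 hjd) (by omega)
    omega
  rw [rowStep, foldl_oddRefl_range (by rw [hkt]; exact hnonneg t ht)
    (fun i hi => by simp [weightAfterRows, hi])
    (fun i hi hti => by
      simp only [weightAfterRows, if_pos hi]; exact_mod_cast hlater_rows i (hkt ▸ hti)), hkt]
  ext j
  · simp only [weightAfterRows, Function.update_apply]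
    split_ifs <;> first | omega | subst_vars; rfl
  · simp only [weightAfterRows, ← insert_Ico_add_one_left_eq_Ico ht, filter_insert]
    by_cases hj : (j : ℤ) + 1 ≤ k t
    · rw [if_pos hj, card_insert_of_notMem (by simp)]
      split_ifs <;> push_cast <;> omega
    · rw [if_neg hj]
      split_ifs <;> omega

theorem foldl_rowStep_weightAfterRows (hdec : ∀ j, j + 1 < d → k (j + 1) ≤ k j)
    (hnonneg : ∀ j, j < d → 0 ≤ k j) {t : ℕ} (ht : t ≤ d) :
    (List.range t).reverse.foldl (rowStep n) (weightAfterRows d n k t)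
      = weightAfterRows d n k 0 := by
  induction t with
  | zero => rfl
  | succ t ih =>
    simp only [List.range_succ, List.reverse_append, List.reverse_singleton,
      List.singleton_append, List.foldl_cons]
    rw [rowStep_weightAfterRows hdec hnonneg ht, ih (by omega)]

theorem weightAfterRows_zero {a : ℕ} (ha : a ≤ d) (ha1 : ∀ j, j < a → (n : ℤ) ≤ k j)
    (ha2 : ∀ j, a ≤ j → j < d → k j < (n : ℤ)) :
    weightAfterRows d n k 0
      = (fun j => if j < a then k j - n else 0,
         fun i => if i < n then (a : ℤ) + #{j ∈ Ico a d | (i : ℤ) + 1 ≤ k j} else 0) := by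
  ext j
  · simp only [weightAfterRows, Nat.not_lt_zero, if_false]
    by_cases hja : j < a
    · simp [hja, hja.trans_le ha, ha1 j hja]
    · split_ifs with hjd
      · have := ha2 j (by omega) hjd
        omega
      · rfl
  · simp only [weightAfterRows]
    split_ifs with hj
    · rw [← Ico_union_Ico_eq_Ico (Nat.zero_le a) ha, filter_union,
        card_union_of_disjoint (disjoint_filter_filter (Ico_disjoint_Ico_consecutive 0 a d)),
        filter_true_of_mem fun i hi => ?_]
      · simp
      · have := ha1 i (mem_Ico.mp hi).2
        omega
    · rfl

end

/-- applying the odd reflections in the stated order to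
`Λ₀ = ∑_{j=1}^d k_j ε_j`, with `k_1 ≥ … ≥ k_d ≥ 0` integers and `a` the largest index
with `k_a ≥ n` (`a = 0` if `k_1 < n`), yields
`∑_{j=1}^a (k_j - n) ε_j + ∑_{j=a+1}^d ν_{k_j} + a ν_n`: the `ε_j`-coefficient is
`k_j - n` for `j ≤ a` and `0` otherwise, and the `δ_i`-coefficient (for `i ≤ n`) is
`a + #{j : a < j ≤ d, k_j ≥ i}`. -/
theorem stmt15 (d n a : ℕ) (k : ℕ → ℤ)
    (hdec : ∀ j, j + 1 < d → k (j + 1) ≤ k j)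
    (hnonneg : ∀ j, j < d → 0 ≤ k j)
    (ha : a ≤ d)
    (ha1 : ∀ j, j < a → (n : ℤ) ≤ k j)
    (ha2 : ∀ j, a ≤ j → j < d → k j < (n : ℤ)) :
    (reflSeq d n).foldl (fun w p => oddRefl p.1 p.2 w)
        ((fun j => if j < d then k j else 0, fun _ => 0) : WeightZ)
      = ((fun j => if j < a then k j - n else 0),
         (fun i => if i < n then
            (a : ℤ) + ((Finset.Ico a d).filter fun j => (i : ℤ) + 1 ≤ k j).card
          else 0)) := by
  rw [foldl_reflSeq, ← weightAfterRows_self, foldl_rowStep_weightAfterRows hdec hnonneg le_rfl,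
    weightAfterRows_zero ha ha1 ha2]
end

section
/- Special case of the odd-reflection computation: applying the sequence of odd reflections ε_d - δ_1, …, ε_d - δ_n, ε_{d-1} - δ_1, …, ε_1 - δ_n to Λ₀ = k ε_1 (k ≥ 1 an integer, d ≥ 1, n ≥ 1) yields ν_k = δ_1 + … + δ_k if k ≤ n, and (k - n)ε_1 + ν_n if k > n. -/
lemma foldl_fix {α β : Type*} (f : β → α → β) (b : β) (l : List α)
    (h : ∀ a ∈ l, f b a = b) : l.foldl f b = b := by
  induction l with
  | nil => rfl
  | cons a t ih =>
    rw [List.foldl_cons, h a (by simp)]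
    exact ih fun x hx => h x (by simp [hx])

lemma oddRefl_fix (j i : ℕ) (hj : j ≠ 0) (k : ℤ) :
    oddRefl j i ((fun j => if j = 0 then k else 0, fun _ => 0) : WeightZ)
      = ((fun j => if j = 0 then k else 0, fun _ => 0) : WeightZ) := by
  simp [oddRefl, hj]

lemma pass0 (k : ℤ) (hk : 1 ≤ k) (m : ℕ) :
    ((List.range m).map fun i => ((0:ℕ), i)).foldl (fun w p => oddRefl p.1 p.2 w)
      ((fun j => if j = 0 then k else 0, fun _ => 0) : WeightZ)
    = (fun j => if j = 0 then k - min (m:ℤ) k else 0,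
       fun t : ℕ => if (t:ℤ) < min (m:ℤ) k then 1 else 0) := by
  induction m with
  | zero =>
    simp only [List.range_zero, List.map_nil, List.foldl_nil]
    refine Prod.ext (funext fun x => ?_) (funext fun x => ?_)
    · simp only
      split_ifs <;> omega
    · simp only
      rw [if_neg (by omega)]
  | succ m ih =>
    rw [List.range_succ, List.map_append, List.foldl_append, ih]
    simp only [List.map_cons, List.map_nil, List.foldl_cons, List.foldl_nil]
    by_cases h : (m:ℤ) < k
    · have h1 : min (m:ℤ) k = m := min_eq_left h.le
      have h2 : min ((m+1:ℕ):ℤ) k = (m:ℤ)+1 := by push_cast; omega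
      rw [oddRefl, if_pos (by simp [h1]; omega)]
      refine Prod.ext (funext fun x => ?_) (funext fun x => ?_)
      · simp only [Function.update, h1, h2]
        split_ifs <;> simp_all <;> omega
      · simp only [Function.update, h1, h2]
        split_ifs <;> simp_all <;> omega
    · have h1 : min (m:ℤ) k = k := min_eq_right (by omega)
      have h2 : min ((m+1:ℕ):ℤ) k = k := by rw [min_eq_right]; push_cast; omega
      rw [oddRefl, if_neg (by simp [h1]; omega)]
      rw [h1, h2]

lemma reflSeq_reduce (e n : ℕ) (k : ℤ) :
    (reflSeq (e+1) n).foldl (fun w p => oddRefl p.1 p.2 w)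
      ((fun j => if j = 0 then k else 0, fun _ => 0) : WeightZ)
    = ((List.range n).map fun i => ((0:ℕ), i)).foldl (fun w p => oddRefl p.1 p.2 w)
      ((fun j => if j = 0 then k else 0, fun _ => 0) : WeightZ) := by
  induction e with
  | zero =>
    have : reflSeq 1 n = (List.range n).map fun i => ((0:ℕ), i) := by
      simp [reflSeq, List.range_succ]
    rw [this]
  | succ e ih =>
    have : reflSeq (e+2) n
        = ((List.range n).map fun i => ((e+1), i)) ++ reflSeq (e+1) n := by
      rw [reflSeq, reflSeq, List.range_succ, List.reverse_append, List.flatMap_append]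
      simp
    have hfix : ((List.range n).map fun i => ((e+1), i)).foldl (fun w p => oddRefl p.1 p.2 w)
        ((fun j => if j = 0 then k else 0, fun _ => 0) : WeightZ)
        = ((fun j => if j = 0 then k else 0, fun _ => 0) : WeightZ) := by
      apply foldl_fix
      intro a ha
      simp only [List.mem_map, List.mem_range] at ha
      obtain ⟨i, _, rfl⟩ := ha
      exact oddRefl_fix _ _ (by omega) k
    rw [this, List.foldl_append, hfix, ih]

/-- applying the odd reflections to `Λ₀ = k ε_1` (`k ≥ 1`, `d ≥ 1`,
`n ≥ 1`) yields `ν_k = δ_1 + … + δ_k` if `k ≤ n`, and `(k-n)ε_1 + ν_n` if `k > n`. -/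
theorem stmt16 (d n : ℕ) (hd : 1 ≤ d) (hn : 1 ≤ n) (k : ℤ) (hk : 1 ≤ k) :
    ((k : ℤ) ≤ n →
      (reflSeq d n).foldl (fun w p => oddRefl p.1 p.2 w)
          ((fun j => if j = 0 then k else 0, fun _ => 0) : WeightZ)
        = ((fun _ => 0), fun i : ℕ => if (i : ℤ) < k then 1 else 0)) ∧
    ((n : ℤ) < k →
      (reflSeq d n).foldl (fun w p => oddRefl p.1 p.2 w)
          ((fun j => if j = 0 then k else 0, fun _ => 0) : WeightZ)
        = ((fun j => if j = 0 then k - n else 0), fun i => if i < n then 1 else 0)) := by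
  obtain ⟨e, rfl⟩ : ∃ e, d = e + 1 := ⟨d - 1, by omega⟩
  rw [reflSeq_reduce e n k, pass0 k hk n]
  constructor
  · intro hkn
    have h1 : min (n:ℤ) k = k := min_eq_right hkn
    rw [h1]
    refine Prod.ext (funext fun x => ?_) (funext fun x => ?_)
    · simp only
      split_ifs <;> omega
    · rfl
  · intro hnk
    have h1 : min (n:ℤ) k = n := min_eq_left hnk.le
    rw [h1]
    refine Prod.ext rfl (funext fun x => ?_)
    simp only
    split_ifs with h2 h3 <;> first | rfl | (exfalso; omega) | (exfalso; exact h3 (by exact_mod_cast h2))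
end

section
/- Let W = M ⊗ N where M is a weight module all of whose weight spaces are one-dimensional (completely pointed) with weight-basis {q_s}, and N is a finite-dimensional highest weight module with highest weight Λ and highest weight vector v₁. Suppose w = ∑_s q_s ⊗ v^{(s)} is a nonzero weight vector with X_α w = 0 for all positive root vectors X_α, where v^{(s)} ∈ N has weight weight(w) - weight(q_s). If, among the indices s with v^{(s)} ≠ 0, the index s = p has weight(q_p) minimal, then X_α v^{(p)} = 0 for all positive α, hence v^{(p)} is a scalar multiple of v₁. Consequently any primitive vector in W has a nonzero component along the highest weight vector of N, and primitive vectors of a fixed weight form a space of dimension at most 1. -/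
/-- Lemma 2, abstracted.  `M` is a completely pointed weight module with
weight basis `{q_s}` indexed by `S` (so its weight function `wtM` is injective), and `N`
is a finite-dimensional highest weight module with highest weight vector `v₁` of weight
`ΛN` (the unique vector, up to scalar, killed by all positive root operators `XN α`).
An element of `W = M ⊗ N` is a finitely supported function `w : S →₀ N`,
`w = ∑_s q_s ⊗ v^{(s)}`.  The action of a positive root vector `X_α` is
`A α w = ∑_s (X_α q_s) ⊗ v^{(s)} + (-1)^{|X_α||q_s|} q_s ⊗ X_α v^{(s)}`, where the
`M`-part `XM α s` of `X_α q_s` is supported on basis vectors of strictly higher weight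
and `σ α s` is the (nonzero) sign.  Weight vectors of total weight `ν` have their
`s`-component in the `(ν - wtM s)`-weight space `Nwt (ν - wtM s)` of `N`, and distinct
weight spaces of `N` intersect trivially.

If `w ≠ 0` is primitive (`A α w = 0` for all `α`) of weight `ν` and `p ∈ supp w` has
minimal `M`-weight, then `XN α (w p) = 0` for all `α`, so `w p` is a nonzero scalar
multiple of `v₁`; consequently primitive vectors of the fixed weight `ν` form a space of
dimension at most `1`: any primitive weight-`ν` vector `w'` is a scalar multiple of `w`. -/
theorem stmt17 {S ι N Λw : Type*} [AddCommGroup N] [Module ℂ N]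
    [AddCommGroup Λw] [PartialOrder Λw]
    (wtM : S → Λw) (hinj : Function.Injective wtM)
    (XM : ι → S → (S →₀ ℂ)) (XN : ι → Module.End ℂ N) (σ : ι → S → ℂ)
    (hraise : ∀ α s s', s' ∈ (XM α s).support → wtM s < wtM s')
    (hσ : ∀ α s, σ α s ≠ 0)
    (v₁ : N) (hv₁ : v₁ ≠ 0)
    (hN : ∀ v : N, (∀ α, XN α v = 0) → ∃ c : ℂ, v = c • v₁)
    (A : ι → (S →₀ N) → (S →₀ N))
    (hA : ∀ α (w : S →₀ N), A α w =
      w.sum fun s v =>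
        ((XM α s).sum fun s' c => Finsupp.single s' (c • v)) +
          Finsupp.single s (σ α s • XN α v))
    (Nwt : Λw → Submodule ℂ N)
    (hdisj : ∀ μ μ', μ ≠ μ' → Nwt μ ⊓ Nwt μ' = ⊥)
    (ΛN : Λw) (hv₁w : v₁ ∈ Nwt ΛN)
    (ν : Λw)
    (w : S →₀ N) (hw0 : w ≠ 0) (hprim : ∀ α, A α w = 0)
    (hwwt : ∀ s, w s ∈ Nwt (ν - wtM s))
    (p : S) (hp : p ∈ w.support) (hmin : ∀ s ∈ w.support, ¬ wtM s < wtM p) :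
    (∀ α, XN α (w p) = 0) ∧
    (∃ c : ℂ, c ≠ 0 ∧ w p = c • v₁) ∧
    (∀ w' : S →₀ N, (∀ α, A α w' = 0) → (∀ s, w' s ∈ Nwt (ν - wtM s)) →
      ∃ c : ℂ, w' = c • w) := by

  classical
  -- key: at a minimal-weight support element, the N-component is killed by XN α
  have key : ∀ (u : S →₀ N) (α : ι), A α u = 0 →
      ∀ p' ∈ u.support, (∀ s ∈ u.support, ¬ wtM s < wtM p') → XN α (u p') = 0 := by
    intro u α hu p' hp' hmin'
    have h0 : (A α u) p' = 0 := by rw [hu]; rfl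
    rw [hA, Finsupp.sum_apply, Finsupp.sum] at h0
    have heq : ∀ s ∈ u.support, s ≠ p' →
        ((((XM α s).sum fun s' c => Finsupp.single s' (c • u s)) +
          Finsupp.single s (σ α s • XN α (u s))) p' = 0) := by
      intro s hs hne
      rw [Finsupp.add_apply, Finsupp.sum_apply, Finsupp.sum,
        Finsupp.single_apply, if_neg hne, add_zero]
      refine Finset.sum_eq_zero fun s' hs' => ?_
      rw [Finsupp.single_apply, if_neg]
      rintro rfl
      exact hmin' s hs (hraise α s s' hs')
    rw [Finset.sum_eq_single p' heq (fun h => absurd hp' h)] at h0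
    have hzero : ((XM α p').sum fun s' c => Finsupp.single s' (c • u p')) p' = 0 := by
      rw [Finsupp.sum_apply, Finsupp.sum]
      refine Finset.sum_eq_zero fun s' hs' => ?_
      rw [Finsupp.single_apply, if_neg]
      intro h
      rw [h] at hs'
      exact lt_irrefl _ (hraise α p' p' hs')
    rw [Finsupp.add_apply, hzero, zero_add, Finsupp.single_apply, if_pos rfl] at h0
    have := congrArg (fun x => (σ α p')⁻¹ • x) h0
    simpa [smul_smul, inv_mul_cancel₀ (hσ α p')] using this
  -- part 1
  have part1 : ∀ α, XN α (w p) = 0 := fun α => key w α (hprim α) p hp hmin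
  -- part 2
  obtain ⟨c, hc⟩ := hN (w p) part1
  have hwp0 : w p ≠ 0 := Finsupp.mem_support_iff.mp hp
  have hc0 : c ≠ 0 := by rintro rfl; exact hwp0 (by simpa using hc)
  have hΛ : ν - wtM p = ΛN := by
    by_contra hne
    have h1 : w p ∈ Nwt (ν - wtM p) ⊓ Nwt ΛN :=
      ⟨hwwt p, hc ▸ Submodule.smul_mem _ c hv₁w⟩
    rw [hdisj _ _ hne] at h1
    exact hwp0 ((Submodule.mem_bot ℂ).mp h1)
  -- main: any nonzero primitive weight-ν vector has nonzero v₁-component at p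
  have main : ∀ u : S →₀ N, u ≠ 0 → (∀ α, A α u = 0) → (∀ s, u s ∈ Nwt (ν - wtM s)) →
      p ∈ u.support ∧ ∃ c' : ℂ, c' ≠ 0 ∧ u p = c' • v₁ := by
    intro u hu0 hup huw
    obtain ⟨m, hm, hmmin⟩ := Finset.exists_minimal
      ((Finsupp.support_nonempty_iff.mpr hu0).image wtM)
    obtain ⟨p', hp', hp'm⟩ := Finset.mem_image.mp hm
    have hmin' : ∀ s ∈ u.support, ¬ wtM s < wtM p' := by
      intro s hs
      rw [hp'm]
      exact fun hlt => hlt.not_ge (hmmin (Finset.mem_image_of_mem wtM hs) hlt.le)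
    have hXN : ∀ α, XN α (u p') = 0 := fun α => key u α (hup α) p' hp' hmin'
    obtain ⟨c', hc'⟩ := hN _ hXN
    have hup0 : u p' ≠ 0 := Finsupp.mem_support_iff.mp hp'
    have hc'0 : c' ≠ 0 := by rintro rfl; exact hup0 (by simpa using hc')
    have hΛ' : ν - wtM p' = ΛN := by
      by_contra hne
      have h1 : u p' ∈ Nwt (ν - wtM p') ⊓ Nwt ΛN :=
        ⟨huw p', hc' ▸ Submodule.smul_mem _ c' hv₁w⟩
      rw [hdisj _ _ hne] at h1
      exact hup0 ((Submodule.mem_bot ℂ).mp h1)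
    have hpwt : wtM p' = wtM p := by
      have h1 : ν - (ν - wtM p') = ν - (ν - wtM p) := by rw [hΛ', hΛ]
      simpa [sub_sub_cancel] using h1
    have hpp : p' = p := hinj hpwt
    exact ⟨hpp ▸ hp', c', hc'0, hpp ▸ hc'⟩
  -- linearity of A
  have hAadd : ∀ α (u u' : S →₀ N), A α (u + u') = A α u + A α u' := by
    intro α u u'
    rw [hA, hA, hA, Finsupp.sum_add_index']
    · intro s; simp [Finsupp.sum]
    · intro s v v'
      simp only [smul_add, map_add, Finsupp.single_add, Finsupp.sum_add]
      abel
  have hAsmul : ∀ α (d : ℂ) (u : S →₀ N), A α (d • u) = d • A α u := by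
    intro α d u
    rw [hA, hA, Finsupp.sum_smul_index', Finsupp.smul_sum]
    · refine Finsupp.sum_congr fun s _ => ?_
      simp [smul_add, Finsupp.smul_sum, Finsupp.smul_single, map_smul,
        smul_comm d, smul_smul, mul_comm]
    · intro s; simp [Finsupp.sum]
  refine ⟨part1, ⟨c, hc0, hc⟩, ?_⟩
  intro w' hw' hw'wt
  by_cases h0 : w' = 0
  · exact ⟨0, by simp [h0]⟩
  obtain ⟨hpin, c', hc'0, hc'⟩ := main w' h0 hw' hw'wt
  refine ⟨c' / c, ?_⟩
  have hu : w' - (c' / c) • w = 0 := by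
    by_contra hne
    have hsub : ∀ α, A α (w' - (c' / c) • w) = 0 := by
      intro α
      rw [sub_eq_add_neg, ← neg_smul, hAadd, hAsmul, hw' α, hprim α, smul_zero, add_zero]
    have hsubwt : ∀ s, (w' - (c' / c) • w) s ∈ Nwt (ν - wtM s) := by
      intro s
      rw [Finsupp.sub_apply, Finsupp.smul_apply]
      exact Submodule.sub_mem _ (hw'wt s) (Submodule.smul_mem _ _ (hwwt s))
    obtain ⟨hpin', _⟩ := main _ hne hsub hsubwt
    have : (w' - (c' / c) • w) p = 0 := by
      rw [Finsupp.sub_apply, Finsupp.smul_apply, hc', hc, smul_smul,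
        div_mul_cancel₀ _ hc0, sub_self]
    exact Finsupp.mem_support_iff.mp hpin' this
  exact sub_eq_zero.mp hu
end

section
/- Let P be a module over a Lie superalgebra g with exactly one maximal vector (a weight vector not lying in n⁻·P and annihilated by n⁺), up to scalar. Then P is indecomposable: if P = P₁ ⊕ P₂ with both P_i nonzero g-submodules having all weight spaces finite-dimensional, then each P_i contains a nonzero vector of maximal weight not in n⁻·P_i, yielding two linearly independent maximal vectors of P, a contradiction. -/
/-- `n⁻·Q`: the span of the vectors obtained by acting with negative root operators
on a submodule `Q`. -/
def nminus {V : Type*} [AddCommGroup V] [Module ℂ V] {ιY : Type*}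
    (Yops : ιY → Module.End ℂ V) (Q : Submodule ℂ V) : Submodule ℂ V :=
  Submodule.span ℂ {v | ∃ j, ∃ x ∈ Q, v = Yops j x}

/-- A maximal vector of the weight module `P` (here `P` is the whole module, `⊤`):
a nonzero weight vector annihilated by all positive root operators and not lying in
`n⁻·P`. -/
def IsMaximalVec {V Λw : Type*} [AddCommGroup V] [Module ℂ V] {ιX ιY : Type*}
    (Wt : Λw → Submodule ℂ V) (Xops : ιX → Module.End ℂ V)
    (Yops : ιY → Module.End ℂ V) (v : V) : Prop :=
  v ≠ 0 ∧ (∃ μ, v ∈ Wt μ) ∧ (∀ i, Xops i v = 0) ∧ v ∉ nminus Yops ⊤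

/-!
Let `Q ⊕ R = P` be a decomposition into nonzero weight submodules. Since weights are
bounded above, `Q` has a highest weight `μ₀` and a nonzero vector `v₀ ∈ Q` of that weight;
`n⁺` raises weights, so it kills `v₀`. If `v₀ ∈ n⁻·P = n⁻·Q + n⁻·R`, project to weight `μ₀`:
`n⁻·Q` has no `μ₀`-component because `n⁻` strictly lowers the weights of `Q`, all `≤ μ₀`,
and `n⁻·R ⊆ R`, so `v₀` would lie in `R ∩ Q = 0`. Hence both summands contain a maximal
vector, and these two are linearly independent, contradicting uniqueness.
-/

section nminus

variable {V ιY : Type*} [AddCommGroup V] [Module ℂ V] (Yops : ιY → Module.End ℂ V)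

lemma nminus_mono {Q Q' : Submodule ℂ V} (h : Q ≤ Q') : nminus Yops Q ≤ nminus Yops Q' :=
  Submodule.span_mono fun _ ⟨j, x, hx, hv⟩ => ⟨j, x, h hx, hv⟩

lemma nminus_sup (Q R : Submodule ℂ V) :
    nminus Yops (Q ⊔ R) = nminus Yops Q ⊔ nminus Yops R := by
  refine le_antisymm (Submodule.span_le.mpr ?_)
    (sup_le (nminus_mono Yops le_sup_left) (nminus_mono Yops le_sup_right))
  rintro _ ⟨j, _, hx, rfl⟩
  obtain ⟨a, ha, b, hb, rfl⟩ := Submodule.mem_sup.mp hx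
  rw [map_add]
  exact Submodule.add_mem_sup (Submodule.subset_span ⟨j, a, ha, rfl⟩)
    (Submodule.subset_span ⟨j, b, hb, rfl⟩)

lemma nminus_le_of_invariant {R : Submodule ℂ V} (hR : ∀ j, ∀ v ∈ R, Yops j v ∈ R) :
    nminus Yops R ≤ R :=
  Submodule.span_le.mpr fun _ ⟨j, x, hx, hv⟩ => hv ▸ hR j x hx

end nminus

section WeightModule

variable {V Λw : Type*} [AddCommGroup V] [Module ℂ V]
  {Wt : Λw → Submodule ℂ V} {π : Λw → Module.End ℂ V}

lemma proj_eq_zero_of_mem_iSup (hπzero : ∀ μ μ', μ ≠ μ' → ∀ v ∈ Wt μ', π μ v = 0)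
    {s : Set Λw} {μ : Λw} (hμ : μ ∉ s) {w : V} (hw : w ∈ ⨆ μ' ∈ s, Wt μ') :
    π μ w = 0 := by
  refine (iSup₂_le fun μ' hμ' v hv => ?_ : (⨆ μ' ∈ s, Wt μ') ≤ LinearMap.ker (π μ)) hw
  exact hπzero μ μ' (fun h => hμ (h ▸ hμ')) v hv

lemma eq_zero_of_forall_proj_eq_zero (hdecomp : ∀ v : V, ∃ T : Finset Λw, v = ∑ μ ∈ T, π μ v)
    {v : V} (hv : ∀ μ, π μ v = 0) : v = 0 := by
  obtain ⟨T, hT⟩ := hdecomp v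
  rw [hT]
  exact Finset.sum_eq_zero fun μ _ => hv μ

variable [LinearOrder Λw]

lemma exists_highest_weight_vector (hπrange : ∀ μ v, π μ v ∈ Wt μ)
    (hdecomp : ∀ v : V, ∃ T : Finset Λw, v = ∑ μ ∈ T, π μ v)
    (hmax : ∀ T : Set Λw, T.Nonempty → ∃ μ ∈ T, ∀ t ∈ T, t ≤ μ)
    {Q : Submodule ℂ V} (hQ : Q ≠ ⊥) (hQπ : ∀ μ, ∀ v ∈ Q, π μ v ∈ Q) :
    ∃ μ₀, ∃ v₀ ∈ Q, v₀ ∈ Wt μ₀ ∧ v₀ ≠ 0 ∧ ∀ μ, μ₀ < μ → ∀ x ∈ Q, π μ x = 0 := by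
  set S : Set Λw := {μ | ∃ v ∈ Q, v ∈ Wt μ ∧ v ≠ 0}
  have hS : ∀ μ, ∀ x ∈ Q, π μ x ≠ 0 → μ ∈ S := fun μ x hx h =>
    ⟨π μ x, hQπ μ x hx, hπrange μ x, h⟩
  obtain ⟨q, hq, hq0⟩ := (Submodule.ne_bot_iff Q).mp hQ
  have hSne : S.Nonempty := by
    by_contra hempty
    exact hq0 (eq_zero_of_forall_proj_eq_zero hdecomp fun μ =>
      not_not.mp fun h => hempty ⟨μ, hS μ q hq h⟩)
  obtain ⟨μ₀, ⟨v₀, hv₀Q, hv₀W, hv₀⟩, hle⟩ := hmax S hSne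
  exact ⟨μ₀, v₀, hv₀Q, hv₀W, hv₀, fun μ hμ x hx =>
    not_not.mp fun h => (hle μ (hS μ x hx h)).not_gt hμ⟩

lemma raise_highest_weight_vector_eq_zero {ιX : Type*} {Xops : ιX → Module.End ℂ V}
    (hπzero : ∀ μ μ', μ ≠ μ' → ∀ v ∈ Wt μ', π μ v = 0)
    (hdecomp : ∀ v : V, ∃ T : Finset Λw, v = ∑ μ ∈ T, π μ v)
    (hXraise : ∀ i μ, ∀ v ∈ Wt μ, Xops i v ∈ ⨆ μ' ∈ Set.Ioi μ, Wt μ')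
    {Q : Submodule ℂ V} (hQX : ∀ i, ∀ v ∈ Q, Xops i v ∈ Q) {μ₀ : Λw}
    (htop : ∀ μ, μ₀ < μ → ∀ x ∈ Q, π μ x = 0) {v₀ : V} (hv₀Q : v₀ ∈ Q) (hv₀W : v₀ ∈ Wt μ₀)
    (i : ιX) : Xops i v₀ = 0 := by
  refine eq_zero_of_forall_proj_eq_zero hdecomp fun μ => ?_
  rcases le_or_gt μ μ₀ with h | h
  · exact proj_eq_zero_of_mem_iSup hπzero (Set.notMem_Ioi.mpr h) (hXraise i μ₀ v₀ hv₀W)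
  · exact htop μ h _ (hQX i v₀ hv₀Q)

lemma proj_nminus_eq_zero {ιY : Type*} {Yops : ιY → Module.End ℂ V}
    (hπzero : ∀ μ μ', μ ≠ μ' → ∀ v ∈ Wt μ', π μ v = 0)
    (hdecomp : ∀ v : V, ∃ T : Finset Λw, v = ∑ μ ∈ T, π μ v)
    (hπrange : ∀ μ v, π μ v ∈ Wt μ)
    (hYlower : ∀ j μ, ∀ v ∈ Wt μ, Yops j v ∈ ⨆ μ' ∈ Set.Iio μ, Wt μ')
    {W : Submodule ℂ V} {μ₀ : Λw} (htop : ∀ μ, μ₀ < μ → ∀ x ∈ W, π μ x = 0) :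
    ∀ u ∈ nminus Yops W, π μ₀ u = 0 := by
  refine fun u hu => (Submodule.span_le (p := LinearMap.ker (π μ₀))).mpr ?_ hu
  rintro _ ⟨j, x, hx, rfl⟩
  obtain ⟨T, hT⟩ := hdecomp x
  rw [SetLike.mem_coe, LinearMap.mem_ker, hT, map_sum, map_sum]
  refine Finset.sum_eq_zero fun μ _ => ?_
  rcases le_or_gt μ μ₀ with h | h
  · exact proj_eq_zero_of_mem_iSup hπzero (Set.notMem_Iio.mpr h)
      (hYlower j μ _ (hπrange μ x))
  · rw [htop μ h x hx, map_zero, map_zero]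

lemma exists_isMaximalVec_mem_of_isCompl {ιX ιY : Type*}
    {Xops : ιX → Module.End ℂ V} {Yops : ιY → Module.End ℂ V}
    (hπrange : ∀ μ v, π μ v ∈ Wt μ)
    (hπid : ∀ μ, ∀ v ∈ Wt μ, π μ v = v)
    (hπzero : ∀ μ μ', μ ≠ μ' → ∀ v ∈ Wt μ', π μ v = 0)
    (hdecomp : ∀ v : V, ∃ T : Finset Λw, v = ∑ μ ∈ T, π μ v)
    (hmax : ∀ T : Set Λw, T.Nonempty → ∃ μ ∈ T, ∀ t ∈ T, t ≤ μ)
    (hXraise : ∀ i μ, ∀ v ∈ Wt μ, Xops i v ∈ ⨆ μ' ∈ Set.Ioi μ, Wt μ')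
    (hYlower : ∀ j μ, ∀ v ∈ Wt μ, Yops j v ∈ ⨆ μ' ∈ Set.Iio μ, Wt μ')
    {Q R : Submodule ℂ V} (hQ : Q ≠ ⊥) (hQX : ∀ i, ∀ v ∈ Q, Xops i v ∈ Q)
    (hQπ : ∀ μ, ∀ v ∈ Q, π μ v ∈ Q) (hRY : ∀ j, ∀ v ∈ R, Yops j v ∈ R)
    (hRπ : ∀ μ, ∀ v ∈ R, π μ v ∈ R) (hinf : Q ⊓ R = ⊥) (hsup : Q ⊔ R = ⊤) :
    ∃ v ∈ Q, IsMaximalVec Wt Xops Yops v := by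
  obtain ⟨μ₀, v₀, hv₀Q, hv₀W, hv₀, htop⟩ :=
    exists_highest_weight_vector hπrange hdecomp hmax hQ hQπ
  refine ⟨v₀, hv₀Q, hv₀, ⟨μ₀, hv₀W⟩,
    raise_highest_weight_vector_eq_zero hπzero hdecomp hXraise hQX htop hv₀Q hv₀W, ?_⟩
  intro hv
  rw [← hsup, nminus_sup] at hv
  obtain ⟨a, ha, b, hb, hab⟩ := Submodule.mem_sup.mp hv
  have hb : b ∈ R := nminus_le_of_invariant Yops hRY hb
  have hv₀_eq : v₀ = π μ₀ b := by
    rw [← hπid μ₀ v₀ hv₀W, ← hab, map_add,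
      proj_nminus_eq_zero hπzero hdecomp hπrange hYlower htop a ha, zero_add]
  have hmem : v₀ ∈ Q ⊓ R := ⟨hv₀Q, hv₀_eq ▸ hRπ μ₀ b hb⟩
  rw [hinf] at hmem
  exact hv₀ hmem

end WeightModule

theorem stmt19_general {V Λw ιX ιY : Type*} [AddCommGroup V] [Module ℂ V] [LinearOrder Λw]
    (Wt : Λw → Submodule ℂ V)
    (Xops : ιX → Module.End ℂ V) (Yops : ιY → Module.End ℂ V)
    (π : Λw → Module.End ℂ V)
    (hπrange : ∀ μ v, π μ v ∈ Wt μ)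
    (hπid : ∀ μ, ∀ v ∈ Wt μ, π μ v = v)
    (hπzero : ∀ μ μ', μ ≠ μ' → ∀ v ∈ Wt μ', π μ v = 0)
    (hdecomp : ∀ v : V, ∃ T : Finset Λw, v = ∑ μ ∈ T, π μ v)
    (hmax : ∀ T : Set Λw, T.Nonempty → ∃ μ ∈ T, ∀ t ∈ T, t ≤ μ)
    (hXraise : ∀ i μ, ∀ v ∈ Wt μ, Xops i v ∈ ⨆ μ' ∈ Set.Ioi μ, Wt μ')
    (hYlower : ∀ j μ, ∀ v ∈ Wt μ, Yops j v ∈ ⨆ μ' ∈ Set.Iio μ, Wt μ')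
    (huniq : ∀ v w, IsMaximalVec Wt Xops Yops v → IsMaximalVec Wt Xops Yops w →
      ∃ c : ℂ, w = c • v) :
    ∀ P₁ P₂ : Submodule ℂ V, P₁ ≠ ⊥ → P₂ ≠ ⊥ →
      (∀ i, ∀ v ∈ P₁, Xops i v ∈ P₁) → (∀ j, ∀ v ∈ P₁, Yops j v ∈ P₁) →
      (∀ i, ∀ v ∈ P₂, Xops i v ∈ P₂) → (∀ j, ∀ v ∈ P₂, Yops j v ∈ P₂) →
      (∀ μ, ∀ v ∈ P₁, π μ v ∈ P₁) → (∀ μ, ∀ v ∈ P₂, π μ v ∈ P₂) →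
      ¬(P₁ ⊓ P₂ = ⊥ ∧ P₁ ⊔ P₂ = ⊤) := by
  intro P₁ P₂ h₁ h₂ hX₁ hY₁ hX₂ hY₂ hπ₁ hπ₂ ⟨hinf, hsup⟩
  obtain ⟨v₁, hv₁P, hv₁⟩ := exists_isMaximalVec_mem_of_isCompl hπrange hπid hπzero hdecomp
    hmax hXraise hYlower h₁ hX₁ hπ₁ hY₂ hπ₂ hinf hsup
  obtain ⟨v₂, hv₂P, hv₂⟩ := exists_isMaximalVec_mem_of_isCompl hπrange hπid hπzero hdecomp
    hmax hXraise hYlower h₂ hX₂ hπ₂ hY₁ hπ₁ (inf_comm P₁ P₂ ▸ hinf) (sup_comm P₁ P₂ ▸ hsup)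
  obtain ⟨c, rfl⟩ := huniq v₁ v₂ hv₁ hv₂
  have hmem : c • v₁ ∈ P₁ ⊓ P₂ := ⟨P₁.smul_mem c hv₁P, hv₂P⟩
  rw [hinf] at hmem
  exact hv₂.1 hmem

/-- Theorem 5, indecomposability.  Let `P` be a weight module over a Lie
superalgebra, with weight spaces `Wt μ` (finite-dimensional, with weight projections
`π μ` and every vector a finite sum of its weight components), weights totally ordered
with every nonempty set of weights having a greatest element (weights bounded above),
positive root operators `Xops` strictly raising and negative root operators `Yops`
strictly lowering weights.  If `P` has a unique maximal vector up to scalar, then `P` is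
indecomposable: there is no decomposition `P = P₁ ⊕ P₂` into two nonzero invariant
weight submodules. -/
theorem stmt19 {V Λw ιX ιY : Type*} [AddCommGroup V] [Module ℂ V] [LinearOrder Λw]
    (Wt : Λw → Submodule ℂ V)
    (Xops : ιX → Module.End ℂ V) (Yops : ιY → Module.End ℂ V)
    (π : Λw → Module.End ℂ V)
    (hπrange : ∀ μ v, π μ v ∈ Wt μ)
    (hπid : ∀ μ, ∀ v ∈ Wt μ, π μ v = v)
    (hπzero : ∀ μ μ', μ ≠ μ' → ∀ v ∈ Wt μ', π μ v = 0)
    (hdecomp : ∀ v : V, ∃ T : Finset Λw, v = ∑ μ ∈ T, π μ v)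
    (hfin : ∀ μ, FiniteDimensional ℂ (Wt μ))
    (hmax : ∀ T : Set Λw, T.Nonempty → ∃ μ ∈ T, ∀ t ∈ T, t ≤ μ)
    (hXraise : ∀ i μ, ∀ v ∈ Wt μ, Xops i v ∈ ⨆ μ' ∈ Set.Ioi μ, Wt μ')
    (hYlower : ∀ j μ, ∀ v ∈ Wt μ, Yops j v ∈ ⨆ μ' ∈ Set.Iio μ, Wt μ')
    (huniq : ∀ v w, IsMaximalVec Wt Xops Yops v → IsMaximalVec Wt Xops Yops w →
      ∃ c : ℂ, w = c • v) :
    ∀ P₁ P₂ : Submodule ℂ V, P₁ ≠ ⊥ → P₂ ≠ ⊥ →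
      (∀ i, ∀ v ∈ P₁, Xops i v ∈ P₁) → (∀ j, ∀ v ∈ P₁, Yops j v ∈ P₁) →
      (∀ i, ∀ v ∈ P₂, Xops i v ∈ P₂) → (∀ j, ∀ v ∈ P₂, Yops j v ∈ P₂) →
      (∀ μ, ∀ v ∈ P₁, π μ v ∈ P₁) → (∀ μ, ∀ v ∈ P₂, π μ v ∈ P₂) →
      ¬(P₁ ⊓ P₂ = ⊥ ∧ P₁ ⊔ P₂ = ⊤) :=
  stmt19_general Wt Xops Yops π hπrange hπid hπzero hdecomp hmax hXraise hYlower huniq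
end
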